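/- arXiv:2508.04624 — 2 statements merged into one kernel-verified Lean document; each statement's English description precedes it below -/
import Mathlib

section
/- Every smooth representation V of the infinite symmetric group 𝔖 over a field k is a quotient of a direct sum of the representations 𝕍_n (for varying n). In particular ⊕_{n≥0} 𝕍_n is a generator of the category of smooth 𝔖-representations. -/
def FS : Subgroup (Equiv.Perm ℕ) where
  carrier := {σ : Equiv.Perm ℕ | {n : ℕ | σ n ≠ n}.Finite}
  one_mem' := by simp
  mul_mem' := by
    intro a b ha hb
    apply Set.Finite.subset (ha.union hb)
    intro n hn
    simp only [Set.mem_union, Set.mem_setOf_eq]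
    by_contra h
    push_neg at h
    exact hn (by simp [Equiv.Perm.mul_apply, h.2, h.1])
  inv_mem' := by
    intro a ha
    show {n : ℕ | a⁻¹ n ≠ n}.Finite
    have : {n : ℕ | a⁻¹ n ≠ n} = {n : ℕ | a n ≠ n} := by
      ext n
      simp only [Set.mem_setOf_eq, ne_eq]
      constructor
      · intro h he
        apply h
        calc a⁻¹ n = a⁻¹ (a n) := by rw [he]
        _ = n := by simp
      · intro h he
        apply h
        calc a n = a (a⁻¹ n) := by rw [he]
        _ = n := by simp
    rw [this]; exact ha

/-- The representation `𝕍_n`: free `k`-module on the set of tuples of distinct natural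
numbers, i.e. on injections `Fin n ↪ ℕ`. -/
abbrev VV (k : Type) [Field k] (n : ℕ) := (Fin n ↪ ℕ) →₀ k

/-- Action of a permutation on an injective tuple. -/
def embAct (n : ℕ) (σ : Equiv.Perm ℕ) (f : Fin n ↪ ℕ) : Fin n ↪ ℕ :=
  f.trans σ.toEmbedding

/-- The representation of the infinite symmetric group on `𝕍_n`. -/
noncomputable def rhoV (k : Type) [Field k] (n : ℕ) : Representation k FS (VV k n) where
  toFun σ := Finsupp.lmapDomain k k (embAct n (σ : Equiv.Perm ℕ))
  map_one' := by
    show Finsupp.lmapDomain k k (embAct n ((1 : FS) : Equiv.Perm ℕ)) = 1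
    have h : embAct n ((1 : FS) : Equiv.Perm ℕ) = id := by
      funext f
      ext i
      rfl
    rw [h, Finsupp.lmapDomain_id]
    rfl
  map_mul' := by
    intro σ τ
    show Finsupp.lmapDomain k k (embAct n ((σ * τ : FS) : Equiv.Perm ℕ)) = _
    have h : embAct n ((σ * τ : FS) : Equiv.Perm ℕ) =
        embAct n (σ : Equiv.Perm ℕ) ∘ embAct n (τ : Equiv.Perm ℕ) := by
      funext f
      ext i
      rfl
    rw [h, Finsupp.lmapDomain_comp]
    rfl

/-- The standard basis vector `e_{1,…,n}` of `𝕍_n`. -/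
noncomputable def estd (k : Type) [Field k] (n : ℕ) : VV k n :=
  Finsupp.single ⟨Fin.val, Fin.val_injective⟩ 1

/-- A representation of `𝔖` is smooth if every vector is fixed by some `𝔖(n)`. -/
def SmoothRep {k : Type} [Field k] {V : Type} [AddCommGroup V] [Module k V]
    (rho : Representation k FS V) : Prop :=
  ∀ v : V, ∃ n : ℕ, ∀ σ : FS, (∀ i < n, (σ : Equiv.Perm ℕ) i = i) → rho σ v = v

lemma swap_mem_FS (a b : ℕ) : Equiv.swap a b ∈ FS := by
  apply Set.Finite.subset ((Set.finite_singleton b).insert a)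
  intro m hm
  simp only [Set.mem_setOf_eq] at hm
  by_contra h
  simp only [Set.mem_insert_iff, Set.mem_singleton_iff] at h
  push_neg at h
  exact hm (Equiv.swap_apply_of_ne_of_ne h.1 h.2)

lemma exists_ext (n : ℕ) (g : Fin n ↪ ℕ) :
    ∃ σ : FS, ∀ i : Fin n, (σ : Equiv.Perm ℕ) (i : ℕ) = g i := by
  induction n with
  | zero => exact ⟨1, fun i => i.elim0⟩
  | succ n ih =>
    obtain ⟨σ', hσ'⟩ := ih ((⟨Fin.castSucc, Fin.castSucc_injective n⟩ : Fin n ↪ Fin (n+1)).trans g)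
    refine ⟨⟨Equiv.swap ((σ' : Equiv.Perm ℕ) n) (g (Fin.last n)), swap_mem_FS _ _⟩ * σ', ?_⟩
    intro i
    rcases eq_or_ne i (Fin.last n) with rfl | hi
    · show Equiv.swap _ _ ((σ' : Equiv.Perm ℕ) ((Fin.last n : Fin (n+1)) : ℕ)) = _
      have : ((Fin.last n : Fin (n+1)) : ℕ) = n := rfl
      rw [this, Equiv.swap_apply_left]
    · obtain ⟨j, rfl⟩ := Fin.exists_castSucc_eq.mpr hi
      show Equiv.swap _ _ ((σ' : Equiv.Perm ℕ) ((j.castSucc : Fin (n+1)) : ℕ)) = _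
      have hj : ((j.castSucc : Fin (n+1)) : ℕ) = (j : ℕ) := rfl
      rw [hj, hσ' j]
      apply Equiv.swap_apply_of_ne_of_ne
      · rw [← hσ' j]
        intro h
        exact absurd ((σ' : Equiv.Perm ℕ).injective h) (by omega)
      · intro h
        exact absurd (g.injective h) (by simp [Fin.ext_iff]; omega)

lemma rho_eq_of_agree {k : Type} [Field k] {V : Type} [AddCommGroup V] [Module k V]
    (rho : Representation k FS V) (v : V) (n : ℕ)
    (hv : ∀ σ : FS, (∀ i < n, (σ : Equiv.Perm ℕ) i = i) → rho σ v = v)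
    (σ τ : FS) (h : ∀ i < n, (σ : Equiv.Perm ℕ) i = (τ : Equiv.Perm ℕ) i) :
    rho σ v = rho τ v := by
  have hfix : ∀ i < n, ((τ⁻¹ * σ : FS) : Equiv.Perm ℕ) i = i := by
    intro i hi
    show ((τ⁻¹ : FS) : Equiv.Perm ℕ) ((σ : Equiv.Perm ℕ) i) = i
    rw [h i hi]
    show ((τ : Equiv.Perm ℕ))⁻¹ ((τ : Equiv.Perm ℕ) i) = i
    exact Equiv.symm_apply_apply _ _
  have : σ = τ * (τ⁻¹ * σ) := by group
  rw [this, map_mul]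
  show rho τ (rho (τ⁻¹ * σ) v) = rho τ v
  rw [hv _ hfix]

/-- Every smooth representation `V` of the infinite symmetric group `𝔖` is a quotient of
a direct sum of the representations `𝕍_n`: there is a family of equivariant maps
`𝕍_{d i} → V` whose images together span `V`.  In particular `⊕_n 𝕍_n` is a generator
of the category of smooth representations. -/
theorem smooth_is_quotient_of_Vns (k : Type) [Field k] (V : Type) [AddCommGroup V]
    [Module k V] (rho : Representation k FS V) (hsm : SmoothRep rho) :
    ∃ (ι : Type) (d : ι → ℕ) (f : ∀ i : ι, VV k (d i) →ₗ[k] V),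
      (∀ (i : ι) (σ : FS) (x : VV k (d i)), (f i) (rhoV k (d i) σ x) = rho σ ((f i) x)) ∧
      (⨆ i : ι, LinearMap.range (f i)) = ⊤ := by
  classical
  refine ⟨V, fun v => (hsm v).choose,
    fun v => Finsupp.lift V k (Fin ((hsm v).choose) ↪ ℕ)
      (fun g => rho ((exists_ext _ g).choose) v), ?_, ?_⟩
  · intro v σ x
    induction x using Finsupp.induction_linear with
    | zero => simp
    | add a b ha hb => simp only [map_add, ha, hb]
    | single g c =>
      have h1 : rhoV k ((hsm v).choose) σ (Finsupp.single g c)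
          = Finsupp.single (embAct _ (σ : Equiv.Perm ℕ) g) c := by
        show Finsupp.mapDomain _ _ = _
        rw [Finsupp.mapDomain_single]
      rw [h1]
      rw [Finsupp.lift_apply, Finsupp.lift_apply,
        Finsupp.sum_single_index (by simp), Finsupp.sum_single_index (by simp),
        map_smul]
      congr 1
      have key := rho_eq_of_agree rho v ((hsm v).choose) (hsm v).choose_spec
        ((exists_ext _ (embAct _ (σ : Equiv.Perm ℕ) g)).choose)
        (σ * (exists_ext _ g).choose) ?_
      · rw [key, map_mul]; rfl
      · intro i hi
        have h2 := (exists_ext _ (embAct _ (σ : Equiv.Perm ℕ) g)).choose_spec ⟨i, hi⟩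
        have h3 := (exists_ext _ g).choose_spec (⟨i, hi⟩ : Fin ((hsm v).choose))
        show _ = (σ : Equiv.Perm ℕ) (((exists_ext _ g).choose : Equiv.Perm ℕ) i)
        rw [h2, h3]
        rfl
  · rw [eq_top_iff]
    intro v _
    apply Submodule.mem_iSup_of_mem v
    refine ⟨Finsupp.single ⟨Fin.val, Fin.val_injective⟩ 1, ?_⟩
    rw [Finsupp.lift_apply, Finsupp.sum_single_index (by simp), one_smul]
    apply (hsm v).choose_spec
    intro i hi
    exact (exists_ext _ ⟨Fin.val, Fin.val_injective⟩).choose_spec ⟨i, hi⟩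
end

section
/- Let 𝕍_n and 𝕍_m be the standard 'distinct index' representations of the infinite symmetric group 𝔖. Then there is an 𝔖-equivariant direct sum decomposition 𝕍_n ⊗ 𝕍_m ≅ ⊕_Γ 𝕍_{n+m−#E(Γ)}, where Γ runs over partial bipartite matchings between an n-element set and an m-element set, and #E(Γ) is the number of edges of Γ. -/
open TensorProduct

/-- A partial bipartite matching between `Fin n` and `Fin m`: a set of edges such that
distinct edges share no endpoint. -/
def Matching (n m : ℕ) : Type :=
  {Γ : Finset (Fin n × Fin m) // ∀ p ∈ Γ, ∀ q ∈ Γ, (p.1 = q.1 ↔ p.2 = q.2)}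

section TensorDecompAux

variable {n m : ℕ}

/-- The matching induced by a pair of injective tuples. -/
def matchOf (f : Fin n ↪ ℕ) (g : Fin m ↪ ℕ) : Matching n m :=
  ⟨Finset.univ.filter (fun p => f p.1 = g p.2), by
    intro p hp q hq
    simp only [Finset.mem_filter, Finset.mem_univ, true_and] at hp hq
    constructor
    · intro h; apply g.injective; rw [← hp, ← hq, h]
    · intro h; apply f.injective; rw [hp, hq, h]⟩

@[simp] lemma mem_matchOf {f : Fin n ↪ ℕ} {g : Fin m ↪ ℕ} {p : Fin n × Fin m} :
    p ∈ (matchOf f g).1 ↔ f p.1 = g p.2 := by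
  simp [matchOf]

/-- Unmatched right-hand vertices. -/
def UM (S : Finset (Fin n × Fin m)) : Type := {b : Fin m // ∀ a, (a, b) ∉ S}

instance (S : Finset (Fin n × Fin m)) : Fintype (UM S) :=
  Subtype.fintype _

instance (S : Finset (Fin n × Fin m)) : DecidableEq (UM S) :=
  Subtype.instDecidableEq

instance : DecidableEq (Matching n m) := Subtype.instDecidableEq

lemma matching_left_unique (Γ : Matching n m) {a a' : Fin n} {b : Fin m}
    (h1 : (a, b) ∈ Γ.1) (h2 : (a', b) ∈ Γ.1) : a = a' :=
  (Γ.2 _ h1 _ h2).mpr rfl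

lemma card_UM (Γ : Matching n m) : Fintype.card (Fin n ⊕ UM Γ.1) = n + m - Γ.1.card := by
  have himg : (Γ.1.image Prod.snd).card = Γ.1.card := by
    apply Finset.card_image_of_injOn
    intro p hp q hq h
    exact Prod.ext ((Γ.2 p hp q hq).mpr h) h
  have hfilter : Finset.univ.filter (fun b : Fin m => ¬ ∀ a, (a, b) ∉ Γ.1)
      = Γ.1.image Prod.snd := by
    ext b
    simp only [Finset.mem_filter, Finset.mem_univ, true_and, Finset.mem_image, not_forall,
      not_not]
    constructor
    · rintro ⟨a, ha⟩; exact ⟨(a, b), ha, rfl⟩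
    · rintro ⟨⟨a, b'⟩, hp, rfl⟩; exact ⟨a, hp⟩
  have hcardU : Fintype.card (UM Γ.1) = m - Γ.1.card := by
    have hcs : Fintype.card (UM Γ.1)
        = (Finset.univ.filter (fun b : Fin m => ∀ a, (a, b) ∉ Γ.1)).card :=
      Fintype.card_subtype _
    rw [hcs]
    have := Finset.card_filter_add_card_filter_not
      (s := (Finset.univ : Finset (Fin m))) (p := fun b => ∀ a, (a, b) ∉ Γ.1)
    rw [hfilter, himg] at this
    rw [Finset.card_univ, Fintype.card_fin] at this
    omega
  have hle : Γ.1.card ≤ m := by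
    rw [← himg]
    calc (Γ.1.image Prod.snd).card ≤ Fintype.card (Fin m) := Finset.card_le_univ _
    _ = m := Fintype.card_fin m
  rw [Fintype.card_sum, Fintype.card_fin, hcardU]
  omega

/-- A fixed enumeration of `Fin n ⊕ UM Γ`. -/
noncomputable def eGamma (Γ : Matching n m) : Fin (n + m - Γ.1.card) ≃ (Fin n ⊕ UM Γ.1) :=
  (Fintype.equivFinOfCardEq (card_UM Γ)).symm

def elimF (f : Fin n ↪ ℕ) (g : Fin m ↪ ℕ) (S : Finset (Fin n × Fin m)) :
    Fin n ⊕ UM S → ℕ :=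
  Sum.elim f (fun b => g b.1)

lemma elimF_inj (f : Fin n ↪ ℕ) (g : Fin m ↪ ℕ) (Γ : Matching n m)
    (hΓ : matchOf f g = Γ) : Function.Injective (elimF f g Γ.1) := by
  subst hΓ
  rintro (a | b) (a' | b') h
  · exact congrArg _ (f.injective h)
  · exact absurd (mem_matchOf.mpr h) (b'.2 a)
  · exact absurd (mem_matchOf.mpr h.symm) (b.2 a')
  · exact congrArg _ (Subtype.ext (g.injective h))

/-- The merged tuple, as an embedding. -/
noncomputable def Bsnd (f : Fin n ↪ ℕ) (g : Fin m ↪ ℕ) (Γ : Matching n m)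
    (hΓ : matchOf f g = Γ) : Fin (n + m - Γ.1.card) ↪ ℕ :=
  ⟨fun i => elimF f g Γ.1 (eGamma Γ i), (elimF_inj f g Γ hΓ).comp (eGamma Γ).injective⟩

/-- The underlying bijection of the decomposition. -/
noncomputable def Bfun (f : Fin n ↪ ℕ) (g : Fin m ↪ ℕ) :
    Σ Γ : Matching n m, (Fin (n + m - Γ.1.card) ↪ ℕ) :=
  ⟨matchOf f g, Bsnd f g _ rfl⟩

lemma Bfun_eq (f : Fin n ↪ ℕ) (g : Fin m ↪ ℕ) (Γ : Matching n m) (hΓ : matchOf f g = Γ) :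
    Bfun f g = ⟨Γ, Bsnd f g Γ hΓ⟩ := by subst hΓ; rfl

lemma Bfun_inj : Function.Injective
    (fun p : (Fin n ↪ ℕ) × (Fin m ↪ ℕ) => Bfun p.1 p.2) := by
  rintro ⟨f, g⟩ ⟨f', g'⟩ h
  simp only at h
  have h1 : matchOf f g = matchOf f' g' := congrArg Sigma.fst h
  rw [Bfun_eq f' g' (matchOf f g) h1.symm] at h
  rw [Bfun] at h
  have h2 : Bsnd f g (matchOf f g) rfl = Bsnd f' g' (matchOf f g) h1.symm :=
    eq_of_heq ((Sigma.mk.inj_iff.mp h).2)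
  have hpt : ∀ x : Fin n ⊕ UM (matchOf f g).1,
      elimF f g (matchOf f g).1 x = elimF f' g' (matchOf f g).1 x := by
    intro x
    have := DFunLike.congr_fun h2 ((eGamma (matchOf f g)).symm x)
    simpa [Bsnd] using this
  have hf : f = f' := by
    ext a; exact hpt (Sum.inl a)
  have hg : g = g' := by
    ext b
    by_cases hb : ∃ a, (a, b) ∈ (matchOf f g).1
    · obtain ⟨a, ha⟩ := hb
      have hab : f a = g b := mem_matchOf.mp ha
      have hab' : f' a = g' b := mem_matchOf.mp (h1 ▸ ha)
      rw [← hab, ← hab', hf]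
    · push_neg at hb
      exact hpt (Sum.inr ⟨b, hb⟩)
  rw [Prod.mk.injEq]
  exact ⟨hf, hg⟩

lemma Bfun_surj : Function.Surjective
    (fun p : (Fin n ↪ ℕ) × (Fin m ↪ ℕ) => Bfun p.1 p.2) := by
  rintro ⟨Γ, h⟩
  set H : Fin n ⊕ UM Γ.1 → ℕ := fun x => h ((eGamma Γ).symm x) with hH
  have Hinj : Function.Injective H := h.injective.comp (eGamma Γ).symm.injective
  set f : Fin n ↪ ℕ := ⟨fun a => H (Sum.inl a), fun a a' hh => by
    simpa using Sum.inl_injective (Hinj hh)⟩ with hf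
  have hgdef : ∀ b : Fin m, ℕ := fun b => 0
  classical
  set g0 : Fin m → ℕ := fun b =>
    if hb : ∃ a, (a, b) ∈ Γ.1 then f hb.choose
    else H (Sum.inr ⟨b, fun a ha => hb ⟨a, ha⟩⟩) with hg0
  have hg0_matched : ∀ {a : Fin n} {b : Fin m}, (a, b) ∈ Γ.1 → g0 b = f a := by
    intro a b hab
    have hb : ∃ a, (a, b) ∈ Γ.1 := ⟨a, hab⟩
    rw [hg0]
    simp only [dif_pos hb]
    exact congrArg f (matching_left_unique Γ hb.choose_spec hab)
  have hg0_unmatched : ∀ {b : Fin m} (hb : ∀ a, (a, b) ∉ Γ.1),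
      g0 b = H (Sum.inr ⟨b, hb⟩) := by
    intro b hb
    have hb' : ¬ ∃ a, (a, b) ∈ Γ.1 := fun ⟨a, ha⟩ => hb a ha
    rw [hg0]; simp only [dif_neg hb']
  have hfg_ne : ∀ (a : Fin n) (x : UM Γ.1), f a ≠ H (Sum.inr x) := by
    intro a x hx
    exact Sum.inl_ne_inr (Hinj hx)
  have hginj : Function.Injective g0 := by
    intro b b' hbb
    by_cases hb : ∃ a, (a, b) ∈ Γ.1 <;> by_cases hb' : ∃ a', (a', b') ∈ Γ.1
    · obtain ⟨a, ha⟩ := hb; obtain ⟨a', ha'⟩ := hb'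
      rw [hg0_matched ha, hg0_matched ha'] at hbb
      have : a = a' := f.injective hbb
      subst this
      exact (Γ.2 _ ha _ ha').mp rfl
    · obtain ⟨a, ha⟩ := hb
      push_neg at hb'
      rw [hg0_matched ha, hg0_unmatched hb'] at hbb
      exact absurd hbb (hfg_ne a _)
    · obtain ⟨a', ha'⟩ := hb'
      push_neg at hb
      rw [hg0_matched ha', hg0_unmatched hb] at hbb
      exact absurd hbb.symm (hfg_ne a' _)
    · push_neg at hb; push_neg at hb'
      rw [hg0_unmatched hb, hg0_unmatched hb'] at hbb
      have := Hinj hbb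
      simpa using congrArg Subtype.val (Sum.inr_injective this)
  set g : Fin m ↪ ℕ := ⟨g0, hginj⟩ with hg
  have hm : matchOf f g = Γ := by
    apply Subtype.ext
    ext ⟨a, b⟩
    rw [mem_matchOf]
    constructor
    · intro hab
      by_cases hb : ∃ a', (a', b) ∈ Γ.1
      · obtain ⟨a', ha'⟩ := hb
        have : g b = f a' := hg0_matched ha'
        rw [this] at hab
        have haa : a = a' := f.injective hab
        rw [haa]; exact ha'
      · push_neg at hb
        have : g b = H (Sum.inr ⟨b, hb⟩) := hg0_unmatched hb
        rw [this] at hab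
        exact absurd hab (hfg_ne a _)
    · intro hab
      show f a = g0 b
      rw [hg0_matched hab]
  refine ⟨(f, g), ?_⟩
  simp only
  rw [Bfun_eq f g Γ hm]
  congr 1
  ext i
  show elimF f g Γ.1 (eGamma Γ i) = h i
  have : h i = H (eGamma Γ i) := by rw [hH]; simp
  rw [this]
  rcases hx : eGamma Γ i with a | b
  · rfl
  · show g0 b.1 = H (Sum.inr b)
    rw [hg0_unmatched b.2]
    exact congrArg H (congrArg Sum.inr (Subtype.ext rfl))

/-- Equivariance of `Bfun`. -/
lemma Bfun_equivariant (σ : Equiv.Perm ℕ) (f : Fin n ↪ ℕ) (g : Fin m ↪ ℕ) :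
    Bfun (embAct n σ f) (embAct m σ g)
      = ⟨(Bfun f g).1, (Bfun f g).2.trans σ.toEmbedding⟩ := by
  have hΓ : matchOf (embAct n σ f) (embAct m σ g) = matchOf f g := by
    apply Subtype.ext
    ext p
    rw [mem_matchOf, mem_matchOf]
    exact σ.injective.eq_iff
  rw [Bfun_eq _ _ _ hΓ]
  show (⟨matchOf f g, _⟩ : Σ Γ : Matching n m, (Fin (n + m - Γ.1.card) ↪ ℕ)) = _
  congr 1
  ext i
  show elimF (embAct n σ f) (embAct m σ g) _ (eGamma (matchOf f g) i)
    = σ (elimF f g _ (eGamma (matchOf f g) i))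
  rcases eGamma (matchOf f g) i with a | b <;> rfl

/-- The index bijection. -/
noncomputable def Bequiv (n m : ℕ) : ((Fin n ↪ ℕ) × (Fin m ↪ ℕ))
    ≃ Σ Γ : Matching n m, (Fin (n + m - Γ.1.card) ↪ ℕ) :=
  Equiv.ofBijective _ ⟨Bfun_inj, Bfun_surj⟩

@[simp] lemma Bequiv_apply (f : Fin n ↪ ℕ) (g : Fin m ↪ ℕ) :
    Bequiv n m (f, g) = Bfun f g := rfl

end TensorDecompAux

/-- `𝕍_n ⊗ 𝕍_m ≅ ⊕_Γ 𝕍_{n+m−#E(Γ)}`, an `𝔖`-equivariant decomposition of the tensor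
product, where `Γ` runs over partial bipartite matchings between an `n`-element set and
an `m`-element set and `#E(Γ)` is the number of edges of `Γ`. -/
theorem tensor_Vn_Vm_decomposition (k : Type) [Field k] (n m : ℕ) :
    ∃ e : (VV k n ⊗[k] VV k m) ≃ₗ[k] (Π₀ Γ : Matching n m, VV k (n + m - Γ.1.card)),
      ∀ (σ : FS) (x : VV k n) (y : VV k m),
        e (rhoV k n σ x ⊗ₜ[k] rhoV k m σ y) =
          DFinsupp.mapRange.linearMap
            (fun Γ : Matching n m => rhoV k (n + m - Γ.1.card) σ) (e (x ⊗ₜ[k] y)) := by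
  classical
  let E : (VV k n ⊗[k] VV k m) ≃ₗ[k] (Π₀ Γ : Matching n m, VV k (n + m - Γ.1.card)) :=
    (finsuppTensorFinsupp' k (Fin n ↪ ℕ) (Fin m ↪ ℕ)).trans
      ((Finsupp.domLCongr (Bequiv n m)).trans
        (sigmaFinsuppLequivDFinsupp (R := k) (N := k)))
  have key : ∀ (f : Fin n ↪ ℕ) (g : Fin m ↪ ℕ),
      E (Finsupp.single f (1 : k) ⊗ₜ[k] Finsupp.single g (1 : k))
        = DFinsupp.single (Bfun f g).1 (Finsupp.single (Bfun f g).2 (1 : k)) := by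
    intro f g
    show (sigmaFinsuppLequivDFinsupp (R := k) (N := k))
        ((Finsupp.domLCongr (Bequiv n m))
          ((finsuppTensorFinsupp' k _ _)
            (Finsupp.single f (1 : k) ⊗ₜ[k] Finsupp.single g (1 : k)))) = _
    rw [finsuppTensorFinsupp'_single_tmul_single, one_mul, Finsupp.domLCongr_single]
    show sigmaFinsuppEquivDFinsupp (Finsupp.single (Bequiv n m (f, g)) (1 : k)) = _
    rw [sigmaFinsuppEquivDFinsupp_single, Bequiv_apply]
  refine ⟨E, ?_⟩
  intro σ
  have hmain : E.toLinearMap ∘ₗ TensorProduct.map (rhoV k n σ) (rhoV k m σ)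
      = (DFinsupp.mapRange.linearMap
            fun Γ : Matching n m => rhoV k (n + m - Γ.1.card) σ) ∘ₗ E.toLinearMap := by
    apply TensorProduct.ext
    apply Finsupp.lhom_ext'
    intro f
    apply LinearMap.ext_ring
    apply Finsupp.lhom_ext'
    intro g
    apply LinearMap.ext_ring
    simp only [LinearMap.compr₂_apply, LinearMap.compr₂ₛₗ_apply, TensorProduct.mk_apply, LinearMap.coe_comp,
      Function.comp_apply, TensorProduct.map_tmul, LinearEquiv.coe_coe,
      Finsupp.lsingle_apply, LinearMap.smul_apply, one_smul]
    have hρ : ∀ (N : ℕ) (h : Fin N ↪ ℕ),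
        rhoV k N σ (Finsupp.single h (1 : k))
          = Finsupp.single (embAct N (σ : Equiv.Perm ℕ) h) (1 : k) := by
      intro N h
      show Finsupp.lmapDomain k k (embAct N (σ : Equiv.Perm ℕ)) (Finsupp.single h 1) = _
      rw [Finsupp.lmapDomain_apply, Finsupp.mapDomain_single]
    rw [hρ, hρ, key, key, Bfun_equivariant (σ : Equiv.Perm ℕ) f g,
      DFinsupp.mapRange.linearMap_apply, DFinsupp.mapRange_single, hρ]
    rfl
  intro x y
  have := LinearMap.congr_fun hmain (x ⊗ₜ[k] y)
  simpa using this
end
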